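/- Let A = [a_{ij}] be a Bott matrix of size n and let Γ(A) be the subgroup of bijections of ℝⁿ generated by the Euclidean motions s₁, …, s_n. Then the orbit space ℝⁿ/Γ(A), with the quotient topology, is compact. -/

import Mathlib

/-- The Euclidean motion `s_i : ℝⁿ → ℝⁿ` associated to a Bott matrix `A = [a_{ij}]`:
`(s_i x)_j = x_j` for `j < i`, `(s_i x)_i = x_i + 1/2`, and `(s_i x)_j = (-1)^{a_{ij}} x_j`
for `j > i`. -/
noncomputable def sA {n : ℕ} (A : Fin n → Fin n → ℕ) (i : Fin n) (x : Fin n → ℝ) :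
    Fin n → ℝ :=
  fun j => if j < i then x j else if j = i then x j + 1 / 2 else (-1 : ℝ) ^ (A i j) * x j

/-- `Γ(A)`, the subgroup of bijections of `ℝⁿ` generated by the Euclidean motions
`s₁, …, s_n` of a Bott matrix `A`. -/
noncomputable def GammaA {n : ℕ} (A : Fin n → Fin n → ℕ) : Subgroup (Equiv.Perm (Fin n → ℝ)) :=
  Subgroup.closure {σ : Equiv.Perm (Fin n → ℝ) | ∃ i : Fin n, ∀ x, σ x = sA A i x}


/-! Squaring `s_i` gives the translation by the `i`-th standard basis vector, so `Γ(A)` contains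
all translations by `ℤⁿ`. Hence every orbit meets the cube `[0,1]ⁿ`, and the orbit space is the
continuous image of that compact cube. -/

theorem compactSpace_orbitRel_of_forall_exists_smul_mem {G α : Type*} [Group G] [MulAction G α]
    [TopologicalSpace α] {K : Set α} (hK : IsCompact K) (h : ∀ x : α, ∃ g : G, g • x ∈ K) :
    CompactSpace (Quotient (MulAction.orbitRel G α)) := by
  refine ⟨?_⟩
  convert hK.image (continuous_quotient_mk' (s := MulAction.orbitRel G α))
  refine (Set.eq_univ_of_forall fun q => ?_).symm
  induction q using Quotient.inductionOn with
  | h x =>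
    obtain ⟨g, hg⟩ := h x
    exact ⟨g • x, hg, Quotient.sound ⟨g, rfl⟩⟩

def Subgroup.translations {G : Type*} [AddGroup G] (S : Subgroup (Equiv.Perm G)) :
    AddSubgroup G where
  carrier := {v | Equiv.addRight v ∈ S}
  zero_mem' := by simp [S.one_mem]
  add_mem' {a b} ha hb := by simpa [Equiv.addRight_add] using S.mul_mem hb ha
  neg_mem' {a} ha := by simpa [Equiv.neg_addRight] using S.inv_mem ha

section Bott

variable {n : ℕ} (A : Fin n → Fin n → ℕ)

theorem sA_sA (i : Fin n) (x : Fin n → ℝ) : sA A i (sA A i x) = x + Pi.single i 1 := by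
  funext j
  unfold sA
  rcases lt_trichotomy j i with hji | rfl | hij
  · simp [hji, hji.ne]
  · simp only [lt_self_iff_false, ↓reduceIte, Pi.add_apply, Pi.single_eq_same]
    ring
  · simp [hij.not_gt, hij.ne', ← mul_assoc, ← mul_pow]

theorem sA_bijective (i : Fin n) : Function.Bijective (sA A i) := by
  have hsq : sA A i ∘ sA A i = Equiv.addRight (Pi.single i 1) := funext (sA_sA A i)
  exact ⟨.of_comp (f := sA A i) (hsq ▸ (Equiv.addRight _).injective),
    .of_comp (g := sA A i) (hsq ▸ (Equiv.addRight _).surjective)⟩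

noncomputable def sAPerm (i : Fin n) : Equiv.Perm (Fin n → ℝ) :=
  Equiv.ofBijective _ (sA_bijective A i)

theorem sAPerm_mem_GammaA (i : Fin n) : sAPerm A i ∈ GammaA A :=
  Subgroup.subset_closure ⟨i, fun _ => rfl⟩

theorem sAPerm_sq (i : Fin n) : sAPerm A i ^ 2 = Equiv.addRight (Pi.single i 1) :=
  Equiv.ext fun x => by simp [sq, sAPerm, sA_sA]

theorem addRight_intCast_mem_GammaA (m : Fin n → ℤ) :
    Equiv.addRight (fun j => (m j : ℝ)) ∈ GammaA A := by
  change _ ∈ (GammaA A).translations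
  rw [← Finset.univ_sum_single (fun j => (m j : ℝ))]
  refine AddSubgroup.sum_mem _ fun i _ => ?_
  have hsingle : Pi.single i (1 : ℝ) ∈ (GammaA A).translations := by
    show Equiv.addRight _ ∈ GammaA A
    exact sAPerm_sq A i ▸ (GammaA A).pow_mem (sAPerm_mem_GammaA A i) 2
  simpa [← Pi.single_smul] using AddSubgroup.zsmul_mem _ hsingle (m i)

theorem exists_smul_mem_Icc (x : Fin n → ℝ) :
    ∃ g : GammaA A, g • x ∈ Set.Icc 0 1 := by
  refine ⟨⟨_, addRight_intCast_mem_GammaA A fun j => -⌊x j⌋⟩, ?_⟩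
  have hfract : ∀ j, (x + fun j => ((-⌊x j⌋ : ℤ) : ℝ)) j = Int.fract (x j) := fun j => by
    simp [Int.fract, sub_eq_add_neg]
  exact ⟨fun j => (hfract j).ge.trans' (Int.fract_nonneg _),
    fun j => (hfract j).le.trans (Int.fract_lt_one _).le⟩

end Bott

theorem stmt9_general {n : ℕ} (A : Fin n → Fin n → ℕ) :
    CompactSpace (Quotient (MulAction.orbitRel (GammaA A) (Fin n → ℝ))) :=
  compactSpace_orbitRel_of_forall_exists_smul_mem isCompact_Icc (exists_smul_mem_Icc A)

/-- Let `A = [a_{ij}]` be a Bott matrix of size `n` (strictly upper triangular with entries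
in `{0,1}`) and let `Γ(A)` be the subgroup of bijections of `ℝⁿ` generated by the
Euclidean motions `s₁, …, s_n`.  Then the orbit space `ℝⁿ/Γ(A)`, with the quotient
topology, is compact. -/
theorem stmt9 {n : ℕ} (A : Fin n → Fin n → ℕ)
    (hA01 : ∀ i j, A i j ≤ 1) (hAupper : ∀ i j : Fin n, j ≤ i → A i j = 0) :
    CompactSpace (Quotient (MulAction.orbitRel (GammaA A) (Fin n → ℝ))) :=
  stmt9_general A
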